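/- arXiv:1109.6275 — 4 statements merged into one kernel-verified Lean document; each statement's English description precedes it below -/
import Mathlib

section
/- If a graph G contains an induced K_4 on vertices {a,b,c,d}, and G∖{a} is cyclotomic (all eigenvalues in [-2,2]), then none of b, c, d is adjacent to any vertex of G outside {a,b,c,d}. -/
/-!
In `G ∖ {a}` the vertices `b, c, d` still form a triangle. If one of them, say `b`, had a further
neighbour `w`, then `G ∖ {a}` would contain the triangle `bcd` with the pendant edge `bw`. On the
test vector with weight `3/2` at `b` and `1` at `c, d, w`, the adjacency form is at least
`2 (3·3/2 + 1) = 11`, while `2 ‖x‖² = 21/2`; so the largest eigenvalue of `G ∖ {a}` exceeds `2`.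
-/

open Matrix Polynomial SimpleGraph

theorem Matrix.IsHermitian.dotProduct_mulVec_le_of_roots_charpoly_le {ι : Type*} [Fintype ι]
    [DecidableEq ι] {M : Matrix ι ι ℝ} (hM : M.IsHermitian) {r : ℝ}
    (h : ∀ x ∈ M.charpoly.roots, x ≤ r) (v : ι → ℝ) : v ⬝ᵥ M *ᵥ v ≤ r * (v ⬝ᵥ v) := by
  have hN : (algebraMap ℝ (Matrix ι ι ℝ) r - M).IsHermitian :=
    (IsSelfAdjoint.algebraMap _ (.all r)).sub hM
  have hpsd : (algebraMap ℝ (Matrix ι ι ℝ) r - M).PosSemidef := by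
    refine hN.posSemidef_iff_eigenvalues_nonneg.mpr fun i => ?_
    obtain ⟨r', hr', μ, hμ, hν⟩ := Set.mem_sub.mp <|
      spectrum.singleton_sub_eq M r ▸ hN.eigenvalues_mem_spectrum_real i
    have hμr : μ ≤ r := h μ <| (mem_roots M.charpoly_monic.ne_zero).mpr
      (mem_spectrum_iff_isRoot_charpoly.mp hμ)
    change 0 ≤ hN.eigenvalues i
    rw [← hν, Set.mem_singleton_iff.mp hr']
    linarith
  have hform := hpsd.dotProduct_mulVec_nonneg v
  simp only [star_trivial, sub_mulVec, dotProduct_sub, Algebra.algebraMap_eq_smul_one,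
    smul_mulVec, one_mulVec, dotProduct_smul, smul_eq_mul] at hform
  linarith

theorem SimpleGraph.not_adj_of_triangle_of_roots_charpoly_le_two {V : Type*} [Fintype V]
    [DecidableEq V] {H : SimpleGraph V} [DecidableRel H.Adj]
    (h : ∀ x ∈ (H.adjMatrix ℝ).charpoly.roots, x ≤ 2) {p q r s : V}
    (hpq : H.Adj p q) (hpr : H.Adj p r) (hqr : H.Adj q r) (hqs : q ≠ s) (hrs : r ≠ s) :
    ¬H.Adj p s := by
  intro hps
  let x : V → ℝ := Pi.single p (3 / 2) + Pi.single q 1 + Pi.single r 1 + Pi.single s 1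
  have hx := (H.isHermitian_adjMatrix ℝ).dotProduct_mulVec_le_of_roots_charpoly_le h x
  by_cases hqs' : H.Adj q s <;> by_cases hrs' : H.Adj r s <;>
    norm_num [x, add_dotProduct, dotProduct_add, mulVec_add, H.adj_comm _ p, H.adj_comm r q,
      H.adj_comm s, hpq, hpr, hps, hqr, hqs', hrs', hpq.ne, hpr.ne, hps.ne, hqr.ne, hpq.ne',
      hpr.ne', hps.ne', hqr.ne', hqs.symm, hrs.symm] at hx

open scoped Classical

theorem K4_outside_nonadjacent_general (n : ℕ) (G : SimpleGraph (Fin (n + 1)))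
    (a b c d : Fin (n + 1))
    (hab : G.Adj a b) (hac : G.Adj a c) (had : G.Adj a d)
    (hbc : G.Adj b c) (hbd : G.Adj b d) (hcd : G.Adj c d)
    (ha : ∀ x ∈ ((G.adjMatrix ℝ).submatrix a.succAbove a.succAbove).charpoly.roots,
      -2 ≤ x ∧ x ≤ 2) :
    ∀ w : Fin (n + 1), w ≠ a → w ≠ b → w ≠ c → w ≠ d →
      ¬G.Adj b w ∧ ¬G.Adj c w ∧ ¬G.Adj d w := by
  intro w hwa hwb hwc hwd
  have hdel : (G.adjMatrix ℝ).submatrix a.succAbove a.succAbove =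
      (G.comap a.succAbove).adjMatrix ℝ :=
    (Embedding.comap ⟨a.succAbove, Fin.succAbove_right_injective⟩ G).submatrix_adjMatrix ℝ
  rw [hdel] at ha
  have hpendant {p q r : Fin (n + 1)} (hp : p ≠ a) (hq : q ≠ a) (hr : r ≠ a)
      (hpq : G.Adj p q) (hpr : G.Adj p r) (hqr : G.Adj q r) (hqw : q ≠ w) (hrw : r ≠ w) :
      ¬G.Adj p w := by
    obtain ⟨p, rfl⟩ := Fin.exists_succAbove_eq hp
    obtain ⟨q, rfl⟩ := Fin.exists_succAbove_eq hq
    obtain ⟨r, rfl⟩ := Fin.exists_succAbove_eq hr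
    obtain ⟨w, rfl⟩ := Fin.exists_succAbove_eq hwa
    exact not_adj_of_triangle_of_roots_charpoly_le_two (H := G.comap a.succAbove)
      (fun x hx => (ha x hx).2) hpq hpr hqr (ne_of_apply_ne _ hqw) (ne_of_apply_ne _ hrw)
  exact ⟨hpendant hab.ne' hac.ne' had.ne' hbc hbd hcd hwc.symm hwd.symm,
    hpendant hac.ne' hab.ne' had.ne' hbc.symm hcd hbd hwb.symm hwd.symm,
    hpendant had.ne' hab.ne' hac.ne' hbd.symm hcd.symm hbc hwb.symm hwc.symm⟩

/-- If a connected graph `G` contains an induced `K_4` on vertices `{a,b,c,d}` and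
`G ∖ {a}` is cyclotomic (all adjacency eigenvalues in `[-2,2]`), then none of `b, c, d`
is adjacent to any vertex of `G` outside `{a,b,c,d}`. -/
theorem K4_outside_nonadjacent (n : ℕ) (G : SimpleGraph (Fin (n + 1)))
    (hconn : G.Connected)
    (a b c d : Fin (n + 1))
    (hab : G.Adj a b) (hac : G.Adj a c) (had : G.Adj a d)
    (hbc : G.Adj b c) (hbd : G.Adj b d) (hcd : G.Adj c d)
    (ha : ∀ x ∈ ((G.adjMatrix ℝ).submatrix a.succAbove a.succAbove).charpoly.roots,
      -2 ≤ x ∧ x ≤ 2) :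
    ∀ w : Fin (n + 1), w ≠ a → w ≠ b → w ≠ c → w ≠ d →
      ¬G.Adj b w ∧ ¬G.Adj c w ∧ ¬G.Adj d w :=
  K4_outside_nonadjacent_general n G a b c d hab hac had hbc hbd hcd ha
end

section
/- Let G be a connected graph with λ_1(G) > 2 and λ_2(G) ≤ 2. Then the vertex set of G can be partitioned as V = M ∪ A ∪ H where: G restricted to M is minimal subject to having largest eigenvalue > 2; A consists of the vertices of V∖M adjacent to some vertex of M; and the induced subgraph on H = V∖(M∪A) has all eigenvalues in [-2,2]. -/
/-!
Choose `M` inclusion-minimal with `λ₁(G[M]) > 2` and let `H` be the set of vertices neither in `M`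
nor adjacent to it. If `G[H]` had an eigenvalue `> 2`, eigenvectors of `G[M]` and `G[H]` for
eigenvalues `> 2`, extended by zero, would be orthogonal for both the standard inner product and
the adjacency form (disjoint supports, no edges between them), so `xᵀAx > 2 xᵀx` on their whole
span, which forces `λ₂(G) > 2`. The lower bound `-2` holds because a nonnegative symmetric matrix
has `|λ| ≤ λ₁`: replacing an eigenvector `v` by `|v|` can only increase `|vᵀAv|`.
-/

open scoped Classical
open Matrix Finset

namespace Matrix.IsHermitian

variable {n : Type*} [Fintype n] [DecidableEq n] {A : Matrix n n ℝ}

lemma dotProduct_eq_sum_eigenvectorBasis (hA : A.IsHermitian) (x y : n → ℝ) :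
    x ⬝ᵥ y = ∑ i, (hA.eigenvectorBasis i ⬝ᵥ x) * (hA.eigenvectorBasis i ⬝ᵥ y) := by
  have := hA.eigenvectorBasis.sum_inner_mul_inner (WithLp.toLp 2 x) (WithLp.toLp 2 y)
  simp only [EuclideanSpace.inner_eq_star_dotProduct, star_trivial] at this
  rw [dotProduct_comm, ← this]
  exact sum_congr rfl fun i _ => by rw [dotProduct_comm y]

lemma eigenvectorBasis_dotProduct_mulVec (hA : A.IsHermitian) (i : n) (y : n → ℝ) :
    hA.eigenvectorBasis i ⬝ᵥ (A *ᵥ y) = hA.eigenvalues i * (hA.eigenvectorBasis i ⬝ᵥ y) := by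
  rw [dotProduct_mulVec, ← mulVec_transpose, ← conjTranspose_eq_transpose_of_trivial, hA.eq,
    mulVec_eigenvectorBasis, smul_dotProduct, smul_eq_mul]

lemma dotProduct_mulVec_eq_sum_eigenvalues (hA : A.IsHermitian) (x y : n → ℝ) :
    x ⬝ᵥ (A *ᵥ y) = ∑ i, hA.eigenvalues i *
      ((hA.eigenvectorBasis i ⬝ᵥ x) * (hA.eigenvectorBasis i ⬝ᵥ y)) := by
  rw [hA.dotProduct_eq_sum_eigenvectorBasis]
  exact sum_congr rfl fun i _ => by rw [eigenvectorBasis_dotProduct_mulVec]; ring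

lemma dotProduct_mulVec_le_of_eigenvectorBasis_dotProduct_eq_zero (hA : A.IsHermitian)
    {t : ℝ} {x : n → ℝ}
    (hx : ∀ i, t < hA.eigenvalues i → hA.eigenvectorBasis i ⬝ᵥ x = 0) :
    x ⬝ᵥ (A *ᵥ x) ≤ t * (x ⬝ᵥ x) := by
  rw [hA.dotProduct_mulVec_eq_sum_eigenvalues, hA.dotProduct_eq_sum_eigenvectorBasis, mul_sum]
  refine sum_le_sum fun i _ => ?_
  rcases le_or_gt (hA.eigenvalues i) t with hi | hi
  · exact mul_le_mul_of_nonneg_right hi (mul_self_nonneg _)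
  · simp [hx i hi]

lemma card_filter_roots_charpoly (hA : A.IsHermitian) (t : ℝ) :
    (A.charpoly.roots.filter (t < ·)).card = #{i | t < hA.eigenvalues i} := by
  rw [hA.roots_charpoly_eq_eigenvalues, Multiset.filter_map, Multiset.card_map]
  rfl

lemma exists_unit_eigenvector_of_mem_roots (hA : A.IsHermitian) {r : ℝ}
    (hr : r ∈ A.charpoly.roots) :
    ∃ v : n → ℝ, A *ᵥ v = r • v ∧ v ⬝ᵥ v = 1 := by
  obtain ⟨i, rfl⟩ : ∃ i, hA.eigenvalues i = r := by
    simpa [hA.roots_charpoly_eq_eigenvalues] using hr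
  refine ⟨hA.eigenvectorBasis i, hA.mulVec_eigenvectorBasis i, ?_⟩
  have h : inner ℝ (hA.eigenvectorBasis i) (hA.eigenvectorBasis i) = 1 := by
    rw [real_inner_self_eq_norm_sq, hA.eigenvectorBasis.orthonormal.1 i, one_pow]
  rwa [EuclideanSpace.inner_eq_star_dotProduct, star_trivial] at h

lemma two_le_card_filter_roots_charpoly (hA : A.IsHermitian) {t : ℝ} {u w : n → ℝ}
    (hu : t * (u ⬝ᵥ u) < u ⬝ᵥ (A *ᵥ u)) (hw : t * (w ⬝ᵥ w) < w ⬝ᵥ (A *ᵥ w))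
    (huw : u ⬝ᵥ w = 0) (huAw : u ⬝ᵥ (A *ᵥ w) = 0) :
    2 ≤ (A.charpoly.roots.filter (t < ·)).card := by
  rw [hA.card_filter_roots_charpoly]
  by_contra! hcard
  set P : Finset n := {i | t < hA.eigenvalues i}
  -- `P` has at most one element, so some nontrivial combination of `u` and `w` is orthogonal to
  -- every eigenvector with eigenvalue `> t`; but the form `xᵀAx - t xᵀx` is positive on it.
  obtain ⟨a, b, hab, hz⟩ : ∃ a b : ℝ, (a ≠ 0 ∨ b ≠ 0) ∧
      ∀ i ∈ P, hA.eigenvectorBasis i ⬝ᵥ (a • u + b • w) = 0 := by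
    rcases P.eq_empty_or_nonempty with hP | ⟨i₀, hi₀⟩
    · exact ⟨1, 0, by simp, by simp [hP]⟩
    have hP : ∀ i ∈ P, i = i₀ := fun i hi => Finset.card_le_one.mp (by omega) i hi i₀ hi₀
    set p := hA.eigenvectorBasis i₀ ⬝ᵥ u
    set q := hA.eigenvectorBasis i₀ ⬝ᵥ w
    by_cases hp : p = 0
    · exact ⟨1, 0, by simp, fun i hi => by simpa [hP i hi] using hp⟩
    · exact ⟨q, -p, Or.inr (neg_ne_zero.mpr hp), fun i hi => by
        simp only [hP i hi, dotProduct_add, dotProduct_smul, smul_eq_mul]; ring⟩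
  have hwAu : w ⬝ᵥ (A *ᵥ u) = 0 := by
    rw [hA.dotProduct_mulVec_eq_sum_eigenvalues] at huAw ⊢
    simpa only [mul_comm (_ ⬝ᵥ w)] using huAw
  have hle := hA.dotProduct_mulVec_le_of_eigenvectorBasis_dotProduct_eq_zero (t := t)
    (x := a • u + b • w) fun i hi => hz i (by simpa [P] using hi)
  simp only [mulVec_add, mulVec_smul, add_dotProduct, dotProduct_add, smul_dotProduct,
    dotProduct_smul, smul_eq_mul, huw, huAw, hwAu, dotProduct_comm w u] at hle
  rcases hab with ha | hb
  · nlinarith [mul_pos (pow_pos (abs_pos.mpr ha) 2) (sub_pos.mpr hu), sq_abs a,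
      mul_nonneg (sq_nonneg b) (sub_pos.mpr hw).le]
  · nlinarith [mul_pos (pow_pos (abs_pos.mpr hb) 2) (sub_pos.mpr hw), sq_abs b,
      mul_nonneg (sq_nonneg a) (sub_pos.mpr hu).le]

lemma dotProduct_mulVec_le_of_roots_charpoly_le_s12 (hA : A.IsHermitian) {t : ℝ}
    (ht : ∀ x ∈ A.charpoly.roots, x ≤ t) (x : n → ℝ) : x ⬝ᵥ (A *ᵥ x) ≤ t * (x ⬝ᵥ x) :=
  hA.dotProduct_mulVec_le_of_eigenvectorBasis_dotProduct_eq_zero fun i hi =>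
    absurd (ht _ (by simp [hA.roots_charpoly_eq_eigenvalues])) hi.not_ge

lemma exists_lt_dotProduct_mulVec_self (hA : A.IsHermitian) {t r : ℝ}
    (hr : r ∈ A.charpoly.roots) (htr : t < r) : ∃ x : n → ℝ, t * (x ⬝ᵥ x) < x ⬝ᵥ (A *ᵥ x) := by
  obtain ⟨v, hv, hvv⟩ := hA.exists_unit_eigenvector_of_mem_roots hr
  exact ⟨v, by simpa [hv, hvv] using htr⟩

lemma neg_le_of_mem_roots_charpoly (hA : A.IsHermitian) (hnn : ∀ i j, 0 ≤ A i j) {t r : ℝ}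
    (ht : ∀ x ∈ A.charpoly.roots, x ≤ t) (hr : r ∈ A.charpoly.roots) : -t ≤ r := by
  obtain ⟨v, hv, hvv⟩ := hA.exists_unit_eigenvector_of_mem_roots hr
  set w : n → ℝ := fun i => |v i|
  have hww : w ⬝ᵥ w = 1 := by simpa [w, dotProduct, abs_mul_abs_self] using hvv
  have habs : |r| ≤ w ⬝ᵥ (A *ᵥ w) :=
    calc |r| = |v ⬝ᵥ (A *ᵥ v)| := by rw [hv, dotProduct_smul, hvv, smul_eq_mul, mul_one]
      _ ≤ ∑ i, |v i| * ∑ j, A i j * |v j| := by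
        refine (abs_sum_le_sum_abs _ _).trans (sum_le_sum fun i _ => ?_)
        rw [abs_mul]
        refine mul_le_mul_of_nonneg_left ((abs_sum_le_sum_abs _ _).trans_eq ?_) (abs_nonneg _)
        exact sum_congr rfl fun j _ => by rw [abs_mul, abs_of_nonneg (hnn i j)]
      _ = w ⬝ᵥ (A *ᵥ w) := rfl
  have := hA.dotProduct_mulVec_le_of_roots_charpoly_le_s12 ht w
  rw [hww, mul_one] at this
  linarith [neg_abs_le r]

end Matrix.IsHermitian

section ExtendByZero

variable {m n R : Type*} [Fintype m] [Fintype n] [CommSemiring R] {e : m → n}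

lemma Function.Injective.extend_zero_dotProduct (he : e.Injective) (y : m → R) (x : n → R) :
    Function.extend e y 0 ⬝ᵥ x = y ⬝ᵥ (x ∘ e) :=
  (Fintype.sum_of_injective e he _ _ (fun i hi => by rw [Function.extend_apply' _ _ _ hi,
    Pi.zero_apply, zero_mul]) fun j => by rw [he.extend_apply]; rfl).symm

lemma Function.Injective.extend_zero_dotProduct_mulVec (he : e.Injective) (M : Matrix n n R)
    (y z : m → R) :
    Function.extend e y 0 ⬝ᵥ (M *ᵥ Function.extend e z 0) = y ⬝ᵥ (M.submatrix e e *ᵥ z) := by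
  rw [he.extend_zero_dotProduct]
  congr 1
  ext i
  simp only [Function.comp_apply, mulVec, dotProduct_comm (M (e i)), he.extend_zero_dotProduct]
  exact dotProduct_comm _ _

end ExtendByZero

namespace SimpleGraph

variable {V W : Type*} (G : SimpleGraph V)

lemma adjMatrix_nonneg (u v : V) : 0 ≤ G.adjMatrix ℝ u v := by
  rw [adjMatrix_apply]; split_ifs <;> norm_num

variable {G} in
lemma Iso.charpoly_adjMatrix [Fintype V] [Fintype W] {H : SimpleGraph W} (f : G ≃g H) :
    (G.adjMatrix ℝ).charpoly = (H.adjMatrix ℝ).charpoly := by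
  rw [← f.reindex_adjMatrix ℝ, charpoly_reindex]

lemma extend_zero_dotProduct_adjMatrix_mulVec [Fintype V] (s : Set V) (y z : s → ℝ) :
    Function.extend Subtype.val y 0 ⬝ᵥ (G.adjMatrix ℝ *ᵥ Function.extend Subtype.val z 0) =
      y ⬝ᵥ ((G.induce s).adjMatrix ℝ *ᵥ z) := by
  rw [← (Embedding.induce s).submatrix_adjMatrix ℝ]
  exact Subtype.val_injective.extend_zero_dotProduct_mulVec _ y z

theorem two_le_card_filter_roots_charpoly_adjMatrix [Fintype V] {S T : Set V} {t : ℝ}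
    (hST : Disjoint S T) (hadj : ∀ u ∈ S, ∀ v ∈ T, ¬ G.Adj u v)
    (hS : ∃ x ∈ ((G.induce S).adjMatrix ℝ).charpoly.roots, t < x)
    (hT : ∃ x ∈ ((G.induce T).adjMatrix ℝ).charpoly.roots, t < x) :
    2 ≤ ((G.adjMatrix ℝ).charpoly.roots.filter (t < ·)).card := by
  obtain ⟨r, hr, htr⟩ := hS
  obtain ⟨r', hr', htr'⟩ := hT
  obtain ⟨y, hy⟩ := (isHermitian_adjMatrix ℝ _).exists_lt_dotProduct_mulVec_self hr htr
  obtain ⟨z, hz⟩ := (isHermitian_adjMatrix ℝ _).exists_lt_dotProduct_mulVec_self hr' htr'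
  have hself {s : Set V} (x : s → ℝ) :
      Function.extend Subtype.val x 0 ⬝ᵥ Function.extend Subtype.val x 0 = x ⬝ᵥ x := by
    rw [Subtype.val_injective.extend_zero_dotProduct, Function.extend_comp Subtype.val_injective]
  set w := Function.extend Subtype.val z 0
  have hw : ∀ v ∈ S, w v = 0 := fun v hv => Function.extend_apply' _ _ _ <| by
    rintro ⟨a, rfl⟩
    exact hST.notMem_of_mem_left hv a.2
  have hAw : ∀ v ∈ S, (G.adjMatrix ℝ *ᵥ w) v = 0 := fun v hv => by
    rw [mulVec, dotProduct_comm, Subtype.val_injective.extend_zero_dotProduct]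
    exact sum_eq_zero fun a _ => by simp [adjMatrix_apply, hadj v hv a a.2]
  refine (isHermitian_adjMatrix ℝ G).two_le_card_filter_roots_charpoly
    (u := Function.extend Subtype.val y 0) (w := w) ?_ ?_ ?_ ?_
  · rwa [G.extend_zero_dotProduct_adjMatrix_mulVec, hself]
  · rwa [G.extend_zero_dotProduct_adjMatrix_mulVec, hself]
  · rw [Subtype.val_injective.extend_zero_dotProduct]
    exact sum_eq_zero fun a _ => by simp [hw a a.2]
  · rw [Subtype.val_injective.extend_zero_dotProduct]
    exact sum_eq_zero fun a _ => by simp [hAw a a.2]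

end SimpleGraph

theorem salem_MAH_partition_general {V : Type} [Fintype V] (G : SimpleGraph V)
    (h1 : ∃ x ∈ (G.adjMatrix ℝ).charpoly.roots, 2 < x)
    (h2 : (((G.adjMatrix ℝ).charpoly.roots).filter (fun x => 2 < x)).card ≤ 1) :
    ∃ M A H : Set V,
      M ∪ A ∪ H = Set.univ ∧
      Disjoint M A ∧ Disjoint M H ∧ Disjoint A H ∧
      (∃ x ∈ ((G.induce M).adjMatrix ℝ).charpoly.roots, 2 < x) ∧
      (∀ M' : Set V, M' ⊆ M → M' ≠ M →
        ∀ x ∈ ((G.induce M').adjMatrix ℝ).charpoly.roots, x ≤ 2) ∧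
      A = {v | v ∉ M ∧ ∃ u ∈ M, G.Adj u v} ∧
      (∀ x ∈ ((G.induce H).adjMatrix ℝ).charpoly.roots, -2 ≤ x ∧ x ≤ 2) := by
  obtain ⟨M, hM⟩ := exists_minimal_of_wellFoundedLT
    (fun S : Set V => ∃ x ∈ ((G.induce S).adjMatrix ℝ).charpoly.roots, 2 < x)
    ⟨Set.univ, by convert h1 using 5; convert G.induceUnivIso.charpoly_adjMatrix⟩
  set A : Set V := {v | v ∉ M ∧ ∃ u ∈ M, G.Adj u v}
  -- `H` is a variable rather than `(M ∪ A)ᶜ` so that `Fintype ↥H` is the instance of the statement.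
  obtain ⟨H, hHdef⟩ : ∃ H : Set V, (M ∪ A)ᶜ = H := ⟨_, rfl⟩
  have hMH : Disjoint M H := hHdef ▸ disjoint_compl_right.mono_left Set.subset_union_left
  have hnoadj : ∀ u ∈ M, ∀ v ∈ H, ¬ G.Adj u v := fun u hu v hv huv =>
    (hHdef ▸ hv) (.inr ⟨hMH.notMem_of_mem_right hv, u, hu, huv⟩)
  have hH : ∀ x ∈ ((G.induce H).adjMatrix ℝ).charpoly.roots, x ≤ 2 := fun x hx =>
    not_lt.mp fun h2x => by
      have := G.two_le_card_filter_roots_charpoly_adjMatrix hMH hnoadj hM.prop ⟨x, hx, h2x⟩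
      omega
  refine ⟨M, A, H, hHdef ▸ Set.union_compl_self _,
    Set.disjoint_left.mpr fun v hv hvA => hvA.1 hv, hMH,
    hHdef ▸ disjoint_compl_right.mono_left Set.subset_union_right, hM.prop,
    fun M' hsub hne x hx => not_lt.mp fun h2x => hne (hsub.antisymm (hM.2 ⟨x, hx, h2x⟩ hsub)),
    rfl, fun x hx => ⟨?_, hH x hx⟩⟩
  exact (SimpleGraph.isHermitian_adjMatrix ℝ _).neg_le_of_mem_roots_charpoly
    (SimpleGraph.adjMatrix_nonneg _) hH hx

/-- Structure of graphs with `λ_1 > 2` and `λ_2 ≤ 2` (equivalently: exactly one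
eigenvalue exceeds `2`, counted with multiplicity): the vertex set partitions as
`V = M ∪ A ∪ H` where the induced subgraph on `M` is minimal subject to having largest
eigenvalue `> 2`, `A` is the set of vertices outside `M` adjacent to some vertex of `M`,
and the induced subgraph on `H` has all eigenvalues in `[-2,2]`. -/
theorem salem_MAH_partition {V : Type} [Fintype V] (G : SimpleGraph V)
    (hconn : G.Connected)
    (h1 : ∃ x ∈ (G.adjMatrix ℝ).charpoly.roots, 2 < x)
    (h2 : (((G.adjMatrix ℝ).charpoly.roots).filter (fun x => 2 < x)).card ≤ 1) :
    ∃ M A H : Set V,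
      M ∪ A ∪ H = Set.univ ∧
      Disjoint M A ∧ Disjoint M H ∧ Disjoint A H ∧
      (∃ x ∈ ((G.induce M).adjMatrix ℝ).charpoly.roots, 2 < x) ∧
      (∀ M' : Set V, M' ⊆ M → M' ≠ M →
        ∀ x ∈ ((G.induce M').adjMatrix ℝ).charpoly.roots, x ≤ 2) ∧
      A = {v | v ∉ M ∧ ∃ u ∈ M, G.Adj u v} ∧
      (∀ x ∈ ((G.induce H).adjMatrix ℝ).charpoly.roots, -2 ≤ x ∧ x ≤ 2) :=
  salem_MAH_partition_general G h1 h2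
end

section
/- Let G be a graph with eigenvalues λ_1 > 2 and λ_2, ..., λ_n ∈ [-2,2], and suppose λ_1 is irrational. Then the larger root τ of z + 1/z = λ_1 is a real algebraic integer greater than 1 all of whose conjugates lie in the closed unit disc apart from τ itself. -/
open scoped Classical

/-- `lam` lists the eigenvalues of the real matrix `A` in decreasing order. -/
def IsSortedSpectrum {m : ℕ} (A : Matrix (Fin m) (Fin m) ℝ) (lam : Fin m → ℝ) : Prop :=
  Multiset.map lam Finset.univ.val = A.charpoly.roots ∧
    ∀ i j : Fin m, i ≤ j → lam j ≤ lam i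

/-! `λ₁` is a root of the integer polynomial `χ_G`, so it is an algebraic integer, and so is `τ`,
a root of `z² - λ₁ z + 1`. A conjugate `z` of `τ` is the image of `τ` under a `ℚ`-embedding of
`ℚ(τ)`, which sends `λ₁ = τ + τ⁻¹` to `z + z⁻¹`; hence `z + z⁻¹ = λᵢ` for some eigenvalue `λᵢ`.
For `i = 1` this forces `z = τ⁻¹`, and otherwise `z` is a root of `z² - λᵢ z + 1` with
`|λᵢ| ≤ 2`, which lies in the closed unit disc. -/

open Polynomial IntermediateField

theorem SimpleGraph.map_adjMatrix {V α β : Type*} (G : SimpleGraph V) [DecidableRel G.Adj]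
    [NonAssocSemiring α] [NonAssocSemiring β] (f : α →+* β) :
    (G.adjMatrix α).map f = G.adjMatrix β := by
  ext i j
  simp [SimpleGraph.adjMatrix_apply, apply_ite f]

theorem SimpleGraph.aeval_charpoly_adjMatrix {V R S : Type*} [Fintype V] [DecidableEq V]
    (G : SimpleGraph V) [DecidableRel G.Adj] [CommRing R] [CommRing S] [Algebra R S] (x : S) :
    aeval x (G.adjMatrix R).charpoly = (G.adjMatrix S).charpoly.eval x := by
  rw [aeval_def, eval₂_eq_eval_map, ← Matrix.charpoly_map, G.map_adjMatrix]

theorem isIntegral_of_sq_sub_mul_add_one_eq_zero {R A : Type*} [CommRing R] [CommRing A]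
    [Algebra R A] {a t : A} (ha : IsIntegral R a) (ht : t ^ 2 - a * t + 1 = 0) :
    IsIntegral R t := by
  let a' : integralClosure R A := ⟨a, ha⟩
  refine isIntegral_trans t ⟨X ^ 2 - C a' * X + 1, by monicity!, ?_⟩
  simpa [a'] using ht

theorem aeval_add_inv_eq_zero_of_aeval_minpoly {F K L : Type*} [Field F] [Field K] [Field L]
    [Algebra F K] [Algebra F L] {τ : K} (hτ : IsIntegral F τ) {z : L}
    (hz : aeval z (minpoly F τ) = 0) {q : F[X]} (hq : aeval (τ + τ⁻¹) q = 0) :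
    aeval (z + z⁻¹) q = 0 := by
  have hzroot : z ∈ (minpoly F τ).aroots L := mem_aroots.2 ⟨minpoly.ne_zero hτ, hz⟩
  let ψ := (algHomAdjoinIntegralEquiv F hτ).symm ⟨z, hzroot⟩
  have hψ : ψ (AdjoinSimple.gen F τ) = z := algHomAdjoinIntegralEquiv_symm_apply_gen F hτ _
  have hq' : aeval (AdjoinSimple.gen F τ + (AdjoinSimple.gen F τ)⁻¹) q = 0 := by
    apply (algebraMap F⟮τ⟯ K).injective
    rw [← aeval_algebraMap_apply, map_add, map_inv₀, AdjoinSimple.algebraMap_gen, hq, map_zero]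
  rw [← hψ, ← map_inv₀, ← map_add, aeval_algHom_apply, hq', map_zero]

theorem exists_eq_of_aeval_charpoly_eq_zero {ι : Type*} [Fintype ι] [DecidableEq ι]
    {A : Matrix ι ι ℝ} {lam : ι → ℝ} (hspec : Multiset.map lam Finset.univ.val = A.charpoly.roots)
    {w : ℂ} (hw : aeval w A.charpoly = 0) : ∃ i, w = lam i := by
  have hcard : A.charpoly.roots.card = A.charpoly.natDegree := by
    rw [← hspec, Matrix.charpoly_natDegree_eq_dim]; simp
  have hw' : w ∈ (A.charpoly.map (algebraMap ℝ ℂ)).roots :=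
    (mem_roots ((A.charpoly_monic.map _).ne_zero)).2 (by rwa [IsRoot, eval_map, ← aeval_def])
  rw [← A.charpoly_monic.roots_map_of_card_eq_natDegree _ hcard, ← hspec, Multiset.map_map,
    Multiset.mem_map] at hw'
  obtain ⟨i, -, hi⟩ := hw'
  exact ⟨i, hi.symm⟩

theorem eq_or_eq_inv_of_add_inv_eq_add_inv {K : Type*} [Field K] {z w : K} (hz : z ≠ 0)
    (hw : w ≠ 0) (h : z + z⁻¹ = w + w⁻¹) : z = w ∨ z = w⁻¹ := by
  have : (z - w) * (z - w⁻¹) = 0 := by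
    linear_combination z * h + mul_inv_cancel₀ hw - mul_inv_cancel₀ hz
  rcases mul_eq_zero.1 this with h | h
  · exact .inl (sub_eq_zero.1 h)
  · exact .inr (sub_eq_zero.1 h)

theorem Complex.norm_le_one_of_sq_sub_mul_add_one_eq_zero {z : ℂ} {c : ℝ} (hc : |c| ≤ 2)
    (hz : z ^ 2 - c * z + 1 = 0) : ‖z‖ ≤ 1 := by
  obtain ⟨hc₁, hc₂⟩ := abs_le.1 hc
  have hre := congrArg Complex.re hz
  have him := congrArg Complex.im hz
  simp only [add_re, add_im, sub_re, sub_im, mul_re, mul_im, one_re, one_im, zero_re,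
    zero_im, ofReal_re, ofReal_im, pow_two] at hre him
  have hnormSq : z.re ^ 2 + z.im ^ 2 ≤ 1 := by
    rcases eq_or_ne z.im 0 with h0 | h0
    · -- a real root has `(2 z - c)² = c² - 4 ≤ 0`
      rw [h0] at hre ⊢
      nlinarith [sq_nonneg (2 * z.re - c),
        mul_nonneg (sub_nonneg.2 hc₂) (neg_le_iff_add_nonneg.1 hc₁)]
    · -- the roots are `z` and `conj z`, so `c = 2 Re z` and `|z|² = 1`
      have hc : c = 2 * z.re := by
        have : z.im * (c - 2 * z.re) = 0 := by linear_combination -him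
        linarith [(mul_eq_zero.1 this).resolve_left h0]
      nlinarith
  rw [← sq_le_one_iff₀ (norm_nonneg z), Complex.sq_norm, normSq_apply]
  nlinarith

theorem salem_graph_gives_salem_number_general (n : ℕ) (G : SimpleGraph (Fin (n + 1)))
    (lam : Fin (n + 1) → ℝ)
    (hlam : IsSortedSpectrum (G.adjMatrix ℝ) lam)
    (hrest : ∀ i, i ≠ 0 → -2 ≤ lam i ∧ lam i ≤ 2)
    (τ : ℝ) (hτ : 1 < τ) (heq : τ + τ⁻¹ = lam 0) :
    IsIntegral ℤ τ ∧ 1 < τ ∧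
      ∀ z : ℂ, Polynomial.aeval z (minpoly ℚ τ) = 0 → z ≠ (τ : ℂ) →
        ‖z‖ ≤ 1 := by
  obtain ⟨hspec, -⟩ := hlam
  have hτ0 : τ ≠ 0 := by positivity
  have hlam0 : (G.adjMatrix ℝ).charpoly.eval (lam 0) = 0 :=
    isRoot_of_mem_roots (hspec ▸ Multiset.mem_map_of_mem _ (Finset.mem_univ_val 0))
  have hτint : IsIntegral ℤ τ := by
    refine isIntegral_of_sq_sub_mul_add_one_eq_zero (a := lam 0)
      ⟨_, (G.adjMatrix ℤ).charpoly_monic, ?_⟩ ?_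
    · rwa [← aeval_def, G.aeval_charpoly_adjMatrix]
    · rw [← heq]; field_simp; ring
  refine ⟨hτint, hτ, fun z hz hzτ => ?_⟩
  have hz0 : z ≠ 0 := by
    rintro rfl
    exact minpoly.coeff_zero_ne_zero hτint.tower_top hτ0 (by simpa [aeval_def] using hz)
  obtain ⟨i, hi⟩ : ∃ i, z + z⁻¹ = lam i := by
    refine exists_eq_of_aeval_charpoly_eq_zero hspec ?_
    have := aeval_add_inv_eq_zero_of_aeval_minpoly hτint.tower_top hz
      (q := (G.adjMatrix ℚ).charpoly) (by rwa [heq, G.aeval_charpoly_adjMatrix])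
    rwa [G.aeval_charpoly_adjMatrix, ← G.aeval_charpoly_adjMatrix (R := ℝ)] at this
  rcases eq_or_ne i 0 with rfl | hi0
  · have hzτ' : z = (τ : ℂ)⁻¹ := by
      refine (eq_or_eq_inv_of_add_inv_eq_add_inv hz0 (by exact_mod_cast hτ0) ?_).resolve_left hzτ
      rw [hi, ← heq]; push_cast; rfl
    rw [hzτ', norm_inv, Complex.norm_real, Real.norm_of_nonneg (by positivity)]
    exact inv_le_one_of_one_le₀ hτ.le
  · refine Complex.norm_le_one_of_sq_sub_mul_add_one_eq_zero (abs_le.2 (hrest i hi0)) ?_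
    field_simp at hi
    linear_combination hi

/-- Let `G` be a graph with eigenvalues `λ_1 > 2` and `λ_2, …, λ_n ∈ [-2,2]`, with `λ_1`
irrational, and let `τ > 1` be the larger root of `z + 1/z = λ_1`.  Then `τ` is a real
algebraic integer greater than `1` all of whose conjugates other than `τ` itself lie in
the closed unit disc. -/
theorem salem_graph_gives_salem_number (n : ℕ) (G : SimpleGraph (Fin (n + 1)))
    (lam : Fin (n + 1) → ℝ)
    (hlam : IsSortedSpectrum (G.adjMatrix ℝ) lam)
    (h1 : 2 < lam 0)
    (hrest : ∀ i, i ≠ 0 → -2 ≤ lam i ∧ lam i ≤ 2)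
    (hirr : Irrational (lam 0))
    (τ : ℝ) (hτ : 1 < τ) (heq : τ + τ⁻¹ = lam 0) :
    IsIntegral ℤ τ ∧ 1 < τ ∧
      ∀ z : ℂ, Polynomial.aeval z (minpoly ℚ τ) = 0 → z ≠ (τ : ℂ) →
        ‖z‖ ≤ 1 :=
  salem_graph_gives_salem_number_general n G lam hlam hrest τ hτ heq
end

section
/- Let G be the graph obtained from K_n (n ≥ 3) by attaching a pendant path of positive length to each vertex in a subset S of size s with 2 ≤ s ≤ n. Then λ_2(G) ≤ 2. -/
open scoped Classical

/-- The graph obtained from the complete graph `K_n` by attaching, to each vertex `i`, a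
pendant path with `len i` vertices (no path when `len i = 0`).  The path attached at `i`
has vertices `(i, 0), …, (i, len i - 1)`, consecutive ones adjacent, with `(i, 0)` joined
to the clique vertex `i`. -/
def completeWithPendantPaths (n : ℕ) (len : Fin n → ℕ) :
    SimpleGraph (Fin n ⊕ Σ i : Fin n, Fin (len i)) where
  Adj x y :=
    match x, y with
    | Sum.inl i, Sum.inl j => i ≠ j
    | Sum.inl i, Sum.inr p => p.1 = i ∧ (p.2 : ℕ) = 0
    | Sum.inr p, Sum.inl i => p.1 = i ∧ (p.2 : ℕ) = 0
    | Sum.inr p, Sum.inr q =>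
        p.1 = q.1 ∧ ((p.2 : ℕ) + 1 = (q.2 : ℕ) ∨ (q.2 : ℕ) + 1 = (p.2 : ℕ))
  symm := by
    constructor
    rintro (i | p) (j | q) h
    · exact h.symm
    · exact h
    · exact h
    · exact ⟨h.1.symm, h.2.symm⟩
  loopless := by
    constructor
    rintro (i | p) h
    · exact h rfl
    · rcases h.2 with h2 | h2 <;> omega

/-!
Split the adjacency matrix as `A_K + A_P`, where `A_K` holds the edges of the clique `K_n` and
`A_P` the remaining edges. The latter form a disjoint union of paths, a graph of maximum degree
`2`, so `xᵀ A_P x ≤ 2 xᵀx` (the Laplacian is positive semidefinite). On the hyperplane of vectors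
whose clique coordinates sum to zero, `xᵀ A_K x = (∑ xᵢ)² - ∑ xᵢ² ≤ 0`. Hence the quadratic form of
the graph is at most `2 xᵀx` on a hyperplane; since the span of eigenvectors of two eigenvalues
above `2` would meet it in a nonzero vector, at most one eigenvalue exceeds `2`.
-/

open Finset Matrix

namespace SimpleGraph

theorem dotProduct_adjMatrix_top_mulVec {V : Type*} [Fintype V] [DecidableEq V]
    [DecidableRel (⊤ : SimpleGraph V).Adj] (y : V → ℝ) :
    y ⬝ᵥ ((⊤ : SimpleGraph V).adjMatrix ℝ *ᵥ y) = (∑ v, y v) ^ 2 - y ⬝ᵥ y := by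
  have htop : (⊤ : SimpleGraph V).adjMatrix ℝ = of 1 - 1 := by
    ext u v
    by_cases h : u = v <;> simp [adjMatrix_apply, one_apply, h]
  rw [htop, sub_mulVec, one_mulVec, dotProduct_sub]
  simp [dotProduct, mulVec, sum_mul, sq]

variable {V : Type*} (G : SimpleGraph V) [DecidableRel G.Adj]

theorem adjMatrix_eq_add_adjMatrix_sdiff {H : SimpleGraph V} [DecidableRel H.Adj]
    [DecidableRel (G \ H).Adj] (hHG : H ≤ G) :
    G.adjMatrix ℝ = H.adjMatrix ℝ + (G \ H).adjMatrix ℝ := by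
  ext u v
  by_cases h : H.Adj u v
  · simp [adjMatrix_apply, h, hHG h]
  · simp [adjMatrix_apply, h]

theorem adjMatrix_map_inl {W : Type*} (H : SimpleGraph V) [DecidableRel H.Adj]
    [DecidableRel (H.map (Function.Embedding.inl (β := W))).Adj] :
    (H.map (Function.Embedding.inl (β := W))).adjMatrix ℝ = fromBlocks (H.adjMatrix ℝ) 0 0 0 := by
  ext (u | u) (v | v) <;> simp [adjMatrix_apply]

variable [Fintype V]

theorem dotProduct_adjMatrix_mulVec_le [DecidableEq V] {d : ℕ} (hd : ∀ v, G.degree v ≤ d)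
    (x : V → ℝ) : x ⬝ᵥ (G.adjMatrix ℝ *ᵥ x) ≤ d * (x ⬝ᵥ x) := by
  have hlap : 0 ≤ x ⬝ᵥ (G.lapMatrix ℝ *ᵥ x) := by
    simpa using (G.posSemidef_lapMatrix ℝ).dotProduct_mulVec_nonneg x
  have hdeg : x ⬝ᵥ (G.degMatrix ℝ *ᵥ x) ≤ d * (x ⬝ᵥ x) := by
    rw [dotProduct_mulVec_degMatrix, dotProduct, mul_sum]
    refine sum_le_sum fun v _ => ?_
    rw [mul_assoc]
    exact mul_le_mul_of_nonneg_right (by exact_mod_cast hd v) (mul_self_nonneg _)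
  rw [lapMatrix, sub_mulVec, dotProduct_sub] at hlap
  linarith

theorem degree_le_two_of_injective {B : Type*} [DecidableEq B] (f : V → B × ℕ)
    (hf : Function.Injective f)
    (hadj : ∀ u v, G.Adj u v → (f v).1 = (f u).1 ∧ ((f v).2 + 1 = (f u).2 ∨ (f u).2 + 1 = (f v).2))
    (v : V) : G.degree v ≤ 2 := by
  rw [← card_neighborFinset_eq_degree]
  refine (card_le_card_of_injOn f (t := {((f v).1, (f v).2 - 1), ((f v).1, (f v).2 + 1)})
    ?_ hf.injOn).trans card_le_two
  intro w hw
  obtain ⟨hfst, hsnd⟩ := hadj v w ((mem_neighborFinset _ _ _).mp hw)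
  rw [mem_coe, mem_insert, mem_singleton]
  rcases hsnd with hsnd | hsnd
  · exact .inl (Prod.ext hfst (by simp only; omega))
  · exact .inr (Prod.ext hfst hsnd.symm)

end SimpleGraph

theorem Matrix.dotProduct_fromBlocks_zero_mulVec {l m : Type*} [Fintype l] [Fintype m]
    (A : Matrix l l ℝ) (x : l ⊕ m → ℝ) :
    x ⬝ᵥ (fromBlocks A 0 0 0 *ᵥ x) = (x ∘ Sum.inl) ⬝ᵥ (A *ᵥ (x ∘ Sum.inl)) := by
  rw [← Sum.elim_comp_inl_inr x, fromBlocks_mulVec, sumElim_dotProduct_sumElim]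
  simp

namespace Matrix.IsHermitian

variable {ι : Type*} [Fintype ι] [DecidableEq ι] {A : Matrix ι ι ℝ}

theorem dotProduct_eigenvectorBasis (hA : A.IsHermitian) (i j : ι) :
    ⇑(hA.eigenvectorBasis i) ⬝ᵥ ⇑(hA.eigenvectorBasis j) = if i = j then 1 else 0 := by
  rw [← orthonormal_iff_ite.mp hA.eigenvectorBasis.orthonormal i j,
    EuclideanSpace.inner_eq_star_dotProduct, dotProduct_comm]
  simp

theorem dotProduct_mulVec_eigenvectorBasis_add (hA : A.IsHermitian) {i j : ι} (hij : i ≠ j)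
    (a b : ℝ) :
    let x := a • ⇑(hA.eigenvectorBasis i) + b • ⇑(hA.eigenvectorBasis j)
    x ⬝ᵥ (A *ᵥ x) = hA.eigenvalues i * a ^ 2 + hA.eigenvalues j * b ^ 2 ∧
      x ⬝ᵥ x = a ^ 2 + b ^ 2 := by
  simp only [mulVec_add, mulVec_smul, mulVec_eigenvectorBasis, dotProduct_add, add_dotProduct,
    dotProduct_smul, smul_dotProduct, dotProduct_eigenvectorBasis, hij, hij.symm, if_true,
    if_false, smul_eq_mul]
  constructor <;> ring

theorem card_eigenvalues_gt_le_one (hA : A.IsHermitian) {w : ι → ℝ} {c : ℝ}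
    (h : ∀ x, w ⬝ᵥ x = 0 → x ⬝ᵥ (A *ᵥ x) ≤ c * (x ⬝ᵥ x)) :
    #{i | c < hA.eigenvalues i} ≤ 1 := by
  by_contra! hcard
  obtain ⟨i, hi, j, hj, hij⟩ := one_lt_card.mp hcard
  rw [mem_filter_univ] at hi hj
  set p := w ⬝ᵥ ⇑(hA.eigenvectorBasis i)
  set q := w ⬝ᵥ ⇑(hA.eigenvectorBasis j)
  obtain ⟨a, b, hab, hpos⟩ : ∃ a b : ℝ, a * p + b * q = 0 ∧ 0 < a ^ 2 + b ^ 2 := by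
    by_cases hp : p = 0
    · exact ⟨1, 0, by simp [hp], by norm_num⟩
    · exact ⟨q, -p, by ring, by nlinarith [sq_nonneg q, sq_pos_of_ne_zero hp]⟩
  obtain ⟨hquad, hnorm⟩ := hA.dotProduct_mulVec_eigenvectorBasis_add hij a b
  have hle := h (a • ⇑(hA.eigenvectorBasis i) + b • ⇑(hA.eigenvectorBasis j))
    (by simpa only [dotProduct_add, dotProduct_smul, smul_eq_mul] using hab)
  rw [hquad, hnorm] at hle
  rcases le_total (hA.eigenvalues i) (hA.eigenvalues j) with hij' | hji'
  · nlinarith [mul_lt_mul_of_pos_right hi hpos, mul_le_mul_of_nonneg_right hij' (sq_nonneg b)]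
  · nlinarith [mul_lt_mul_of_pos_right hj hpos, mul_le_mul_of_nonneg_right hji' (sq_nonneg a)]

theorem card_filter_roots_charpoly_gt_le_one (hA : A.IsHermitian) {w : ι → ℝ} {c : ℝ}
    (h : ∀ x, w ⬝ᵥ x = 0 → x ⬝ᵥ (A *ᵥ x) ≤ c * (x ⬝ᵥ x)) :
    (A.charpoly.roots.filter (c < ·)).card ≤ 1 := by
  rw [hA.roots_charpoly_eq_eigenvalues, Multiset.filter_map, Multiset.card_map]
  exact hA.card_eigenvalues_gt_le_one h

end Matrix.IsHermitian

namespace completeWithPendantPaths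

variable {n : ℕ} {len : Fin n → ℕ}

/-- Once the clique edges are removed, every edge joins two vertices with the same first
coordinate and consecutive second coordinates. -/
def coord : Fin n ⊕ (Σ i : Fin n, Fin (len i)) → Fin n × ℕ
  | Sum.inl i => (i, 0)
  | Sum.inr p => (p.1, p.2 + 1)

theorem coord_injective : Function.Injective (coord (len := len)) := by
  rintro (i | ⟨i, t⟩) (j | ⟨j, u⟩) h <;> simp [coord, Prod.ext_iff] at h ⊢
  · exact h
  · obtain ⟨rfl, h⟩ := h
    simp [Fin.ext_iff, h]

theorem map_inl_top_le :
    (⊤ : SimpleGraph (Fin n)).map Function.Embedding.inl ≤ completeWithPendantPaths n len := by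
  rintro (i | p) (j | q) h <;> simp [completeWithPendantPaths] at h ⊢
  exact h

theorem coord_of_adj_sdiff {u v}
    (h : (completeWithPendantPaths n len \ (⊤ : SimpleGraph (Fin n)).map Function.Embedding.inl).Adj
      u v) :
    (coord v).1 = (coord u).1 ∧ ((coord v).2 + 1 = (coord u).2 ∨ (coord u).2 + 1 = (coord v).2) := by
  rcases u with i | ⟨i, t⟩ <;> rcases v with j | ⟨j, u⟩ <;>
    simp [completeWithPendantPaths, coord] at h ⊢ <;> grind

theorem dotProduct_adjMatrix_mulVec_le {x : Fin n ⊕ (Σ i : Fin n, Fin (len i)) → ℝ}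
    (hx : ∑ i, x (Sum.inl i) = 0) :
    x ⬝ᵥ ((completeWithPendantPaths n len).adjMatrix ℝ *ᵥ x) ≤ 2 * (x ⬝ᵥ x) := by
  set K := (⊤ : SimpleGraph (Fin n)).map Function.Embedding.inl
  have hclique : x ⬝ᵥ (K.adjMatrix ℝ *ᵥ x) ≤ 0 := by
    rw [SimpleGraph.adjMatrix_map_inl, dotProduct_fromBlocks_zero_mulVec,
      SimpleGraph.dotProduct_adjMatrix_top_mulVec]
    simpa [Function.comp_apply, hx] using dotProduct_self_star_nonneg (x ∘ Sum.inl)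
  have hpaths := SimpleGraph.dotProduct_adjMatrix_mulVec_le _ (d := 2)
    ((completeWithPendantPaths n len \ K).degree_le_two_of_injective coord coord_injective
      fun _ _ => coord_of_adj_sdiff) x
  rw [SimpleGraph.adjMatrix_eq_add_adjMatrix_sdiff _ map_inl_top_le, add_mulVec, dotProduct_add]
  push_cast at hpaths
  linarith

end completeWithPendantPaths

theorem completeWithPendantPaths_second_eigenvalue_general (n : ℕ) (len : Fin n → ℕ) :
    ((((completeWithPendantPaths n len).adjMatrix ℝ).charpoly.roots).filter
        (fun x => 2 < x)).card ≤ 1 :=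
  ((completeWithPendantPaths n len).isHermitian_adjMatrix ℝ).card_filter_roots_charpoly_gt_le_one
    (w := Sum.elim 1 0) fun _ hx => completeWithPendantPaths.dotProduct_adjMatrix_mulVec_le
      (by simpa [dotProduct, Fintype.sum_sum_type] using hx)

/-- Let `G` be obtained from `K_n` (`n ≥ 3`) by attaching a pendant path of positive
length to each vertex in a subset `S` of size `s` with `2 ≤ s ≤ n` (so `len i > 0` exactly
for `i ∈ S`).  Then `λ_2(G) ≤ 2`: at most one eigenvalue of `G` (with multiplicity)
exceeds `2`. -/
theorem completeWithPendantPaths_second_eigenvalue (n : ℕ) (hn : 3 ≤ n)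
    (len : Fin n → ℕ) (S : Finset (Fin n)) (hS : 2 ≤ S.card)
    (hlen : ∀ i, i ∈ S ↔ 0 < len i) :
    ((((completeWithPendantPaths n len).adjMatrix ℝ).charpoly.roots).filter
        (fun x => 2 < x)).card ≤ 1 :=
  completeWithPendantPaths_second_eigenvalue_general n len
end
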